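/- arXiv:1201.3196 — 3 statements merged into one kernel-verified Lean document; each statement's English description precedes it below -/
import Mathlib

section
/- Let f be a C¹ solution on [0,R) of the profile ODE with f(0)=1, f'(0)=0, and suppose f > 0 and f' < 0 on (0,R). If r_m ∈ (0,R] is a point where f' attains its minimum over [0,R] and either f''(r_m)=0 or f''(r_m) ≤ 0, then βμ f(r_m) ≥ |f'(r_m)|^{p/2}, and consequently |f'(r)| ≤ (βμ)^{2/p} for all r ∈ [0,R]. -/
/-!
At the minimum point `r_m` of `f'` we have `f'(r_m) < 0`, so the flux `|f'|^{p-2} f'` is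
differentiable there with derivative `(p - 1) |f'|^{p-2} f'' ≤ 0`. The drift terms
`(N - 1)/r · |f'|^{p-2} f'` and `β r f'` are nonpositive as well, so the ODE at `r_m` leaves
`|f'(r_m)|^{p/2} ≤ β μ f(r_m)`. Since `f` decreases from `f(0) = 1` and `f' ≤ 0` everywhere,
`|f'| ≤ |f'(r_m)| ≤ (β μ f(r_m))^{2/p} ≤ (β μ)^{2/p}`.
-/

open Set

lemma one_le_two_mul_div_add_one {x : ℝ} (hx : 1 ≤ x) : 1 ≤ 2 * x / (x + 1) := by
  rw [le_div_iff₀ (by linarith)]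
  linarith

lemma hasDerivAt_abs_rpow_sub_two_mul_self (p : ℝ) {x : ℝ} (hx : x ≠ 0) :
    HasDerivAt (fun y : ℝ => |y| ^ (p - 2) * y) ((p - 1) * |x| ^ (p - 2)) x := by
  rcases hx.lt_or_gt with hx | hx
  · have hpow : HasDerivAt (fun y => -(-y) ^ (p - 1)) ((p - 1) * |x| ^ (p - 2)) x := by
      refine (((Real.hasDerivAt_rpow_const (p := p - 1) (Or.inl (neg_pos.2 hx).ne')).comp x
        (hasDerivAt_neg x)).neg).congr_deriv ?_
      rw [abs_of_neg hx, show p - 1 - 1 = p - 2 by ring]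
      ring
    refine hpow.congr_of_eventuallyEq ?_
    filter_upwards [Iio_mem_nhds hx] with y (hy : y < 0)
    rw [abs_of_neg hy, show p - 1 = p - 2 + 1 by ring, Real.rpow_add_one (neg_pos.2 hy).ne']
    ring
  · refine ((Real.hasDerivAt_rpow_const (p := p - 1) (Or.inl hx.ne')).congr_deriv ?_).congr_of_eventuallyEq ?_
    · rw [abs_of_pos hx, show p - 1 - 1 = p - 2 by ring]
    filter_upwards [Ioi_mem_nhds hx] with y (hy : 0 < y)
    rw [abs_of_pos hy, show p - 1 = p - 2 + 1 by ring, Real.rpow_add_one hy.ne']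

lemma nonpos_on_Icc_of_neg_on_Ioo {g : ℝ → ℝ} {a b : ℝ} (ha : g a ≤ 0) (hb : ContinuousAt g b)
    (hg : ∀ x ∈ Ioo a b, g x < 0) : ∀ x ∈ Icc a b, g x ≤ 0 := by
  rintro x ⟨hax, hxb⟩
  rcases hax.eq_or_lt with rfl | hax
  · exact ha
  rcases hxb.lt_or_eq with hxb | rfl
  · exact (hg x ⟨hax, hxb⟩).le
  exact ContinuousWithinAt.closure_le (by simp [closure_Ioo hax.ne, hax.le])
    hb.continuousWithinAt continuousWithinAt_const fun y hy => (hg y hy).le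

lemma le_rpow_two_div_of_rpow_div_two_le {x c p : ℝ} (hx : 0 ≤ x) (hc : 0 ≤ c) (hp : 0 < p)
    (h : x ^ (p / 2) ≤ c) : x ≤ c ^ (2 / p) := by
  rwa [← inv_div, Real.le_rpow_inv_iff_of_pos hx hc (by positivity)]

lemma abs_deriv_rpow_le_of_deriv_neg_of_deriv_deriv_nonpos {N p μ β r : ℝ} {f : ℝ → ℝ}
    (hN : 1 ≤ N) (hp : 1 ≤ p) (hβ : 0 ≤ β) (hr : 0 < r) (hf' : deriv f r < 0)
    (hf'' : DifferentiableAt ℝ (deriv f) r) (hsec : deriv (deriv f) r ≤ 0)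
    (hode : deriv (fun s => |deriv f s| ^ (p - 2) * deriv f s) r
        + (N - 1) / r * (|deriv f r| ^ (p - 2) * deriv f r)
        + β * μ * f r + β * r * deriv f r - |deriv f r| ^ (p / 2) = 0) :
    |deriv f r| ^ (p / 2) ≤ β * μ * f r := by
  have hflux : deriv (fun s => |deriv f s| ^ (p - 2) * deriv f s) r ≤ 0 := by
    rw [HasDerivAt.deriv (f := fun s => |deriv f s| ^ (p - 2) * deriv f s)
      ((hasDerivAt_abs_rpow_sub_two_mul_self p hf'.ne).comp r hf''.hasDerivAt)]
    exact mul_nonpos_of_nonneg_of_nonpos (by positivity) hsec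
  have hdrift : (N - 1) / r * (|deriv f r| ^ (p - 2) * deriv f r) ≤ 0 :=
    mul_nonpos_of_nonneg_of_nonpos (by positivity)
      (mul_nonpos_of_nonneg_of_nonpos (by positivity) hf'.le)
  have hconv : β * r * deriv f r ≤ 0 := mul_nonpos_of_nonneg_of_nonpos (by positivity) hf'.le
  linarith

theorem gradient_bound_general (N : ℕ) (hN : 1 ≤ N) (p μ β R : ℝ)
    (hp1 : 2 * N / (N + 1) < p) (hp2 : p < 2)
    (hμ : μ = p / (2 - p)) (hβ : 0 < β)
    (f : ℝ → ℝ) (hfc : ContinuousOn f (Set.Icc 0 R))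
    (hf2 : ∀ r ∈ Set.Ioc 0 R, DifferentiableAt ℝ (deriv f) r)
    (hode : ∀ r ∈ Set.Ioc 0 R,
      deriv (fun s => |deriv f s| ^ (p - 2) * deriv f s) r
        + ((N : ℝ) - 1) / r * (|deriv f r| ^ (p - 2) * deriv f r)
        + β * μ * f r + β * r * deriv f r - |deriv f r| ^ (p / 2) = 0)
    (hf0 : f 0 = 1) (hf'0 : deriv f 0 = 0)
    (hneg : ∀ r ∈ Set.Ioo 0 R, deriv f r < 0)
    (r_m : ℝ) (hrm : r_m ∈ Set.Ioc 0 R)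
    (hmin : ∀ r ∈ Set.Icc 0 R, deriv f r_m ≤ deriv f r)
    (hsec : deriv (deriv f) r_m ≤ 0) :
    |deriv f r_m| ^ (p / 2) ≤ β * μ * f r_m ∧
      ∀ r ∈ Set.Icc 0 R, |deriv f r| ≤ (β * μ) ^ (2 / p) := by
  obtain ⟨hrm0, hrmR⟩ := hrm
  have hR : 0 < R := hrm0.trans_le hrmR
  have hp : 1 < p := (one_le_two_mul_div_add_one (by exact_mod_cast hN)).trans_lt hp1
  have hβμ : 0 < β * μ := mul_pos hβ (hμ ▸ div_pos (by linarith) (by linarith))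
  have hfm : deriv f r_m < 0 :=
    (hmin _ ⟨by linarith, by linarith⟩).trans_lt (hneg (R / 2) ⟨by linarith, by linarith⟩)
  have hbound : |deriv f r_m| ^ (p / 2) ≤ β * μ * f r_m :=
    abs_deriv_rpow_le_of_deriv_neg_of_deriv_deriv_nonpos (by exact_mod_cast hN) hp.le hβ.le hrm0
      hfm (hf2 r_m ⟨hrm0, hrmR⟩) hsec (hode r_m ⟨hrm0, hrmR⟩)
  refine ⟨hbound, fun r hr => ?_⟩
  have hf_le_one : f r_m ≤ 1 := hf0 ▸
    (strictAntiOn_of_deriv_neg (convex_Icc 0 R) hfc (by simpa using hneg)).antitoneOn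
      ⟨le_rfl, hR.le⟩ ⟨hrm0.le, hrmR⟩ hrm0.le
  have hf'_nonpos : deriv f r ≤ 0 :=
    nonpos_on_Icc_of_neg_on_Ioo hf'0.le (hf2 R ⟨hR, le_rfl⟩).continuousAt hneg r hr
  calc |deriv f r| ≤ |deriv f r_m| := abs_le_abs_of_nonpos hf'_nonpos (hmin r hr)
    _ ≤ (β * μ) ^ (2 / p) := le_rpow_two_div_of_rpow_div_two_le (abs_nonneg _) hβμ.le
      (by linarith) (hbound.trans (mul_le_of_le_one_right hβμ.le hf_le_one))

theorem gradient_bound (N : ℕ) (hN : 1 ≤ N) (p μ β R : ℝ)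
    (hp1 : 2 * N / (N + 1) < p) (hp2 : p < 2)
    (hμ : μ = p / (2 - p)) (hβ : 0 < β) (hR : 0 < R)
    (f : ℝ → ℝ) (hfc : ContinuousOn f (Set.Icc 0 R))
    (hf1 : ∀ r ∈ Set.Ioc 0 R, DifferentiableAt ℝ f r)
    (hf2 : ∀ r ∈ Set.Ioc 0 R, DifferentiableAt ℝ (deriv f) r)
    (hode : ∀ r ∈ Set.Ioc 0 R,
      deriv (fun s => |deriv f s| ^ (p - 2) * deriv f s) r
        + ((N : ℝ) - 1) / r * (|deriv f r| ^ (p - 2) * deriv f r)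
        + β * μ * f r + β * r * deriv f r - |deriv f r| ^ (p / 2) = 0)
    (hf0 : f 0 = 1) (hf'0 : deriv f 0 = 0)
    (hpos : ∀ r ∈ Set.Ioo 0 R, 0 < f r)
    (hneg : ∀ r ∈ Set.Ioo 0 R, deriv f r < 0)
    (r_m : ℝ) (hrm : r_m ∈ Set.Ioc 0 R)
    (hmin : ∀ r ∈ Set.Icc 0 R, deriv f r_m ≤ deriv f r)
    (hsec : deriv (deriv f) r_m ≤ 0) :
    |deriv f r_m| ^ (p / 2) ≤ β * μ * f r_m ∧
      ∀ r ∈ Set.Icc 0 R, |deriv f r| ≤ (β * μ) ^ (2 / p) :=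
  gradient_bound_general N hN p μ β R hp1 hp2 hμ hβ f hfc hf2 hode hf0 hf'0 hneg r_m hrm hmin hsec
end

section
/- Define the energy E(r) := ((p-1)/p)|f'(r)|^p + (μβ/2) f(r)². If f is a solution of the profile ODE with f' < 0 on (0,∞), then E is nonincreasing; more precisely E'(r) = −((N-1)/r)|f'(r)|^p − β r |f'(r)|² − |f'(r)|^{(p+2)/2} ≤ 0 for r > 0. -/
/-!
Since `(p - 1) / p * |f'| ^ p` has derivative `(|f'| ^ (p - 2) * f')' * f'` wherever `f' ≠ 0`,
the derivative of the energy is the profile equation multiplied by `f'`, with the terms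
`β μ f f'` cancelling. What remains is a sum of nonpositive terms because `f' < 0`, `N ≥ 1`
and `β > 0`.
-/

namespace Real

theorem hasDerivAt_abs_rpow {x : ℝ} (hx : x ≠ 0) (p : ℝ) :
    HasDerivAt (fun y => |y| ^ p) (p * |x| ^ (p - 2) * x) x := by
  have hx' : 0 < |x| := abs_pos.mpr hx
  refine ((hasDerivAt_abs hx).rpow_const (p := p) (Or.inl hx'.ne')).congr_deriv ?_
  rw [show p - 1 = (p - 2) + 1 by ring, rpow_add_one hx'.ne']
  linear_combination p * |x| ^ (p - 2) * sign_mul_abs x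

theorem hasDerivAt_abs_rpow_sub_two_mul_self {x : ℝ} (hx : x ≠ 0) (p : ℝ) :
    HasDerivAt (fun y => |y| ^ (p - 2) * y) ((p - 1) * |x| ^ (p - 2)) x := by
  have hx' : 0 < |x| := abs_pos.mpr hx
  refine ((hasDerivAt_abs_rpow hx (p - 2)).mul (hasDerivAt_id x)).congr_deriv ?_
  rw [rpow_sub hx' (p - 2) 2, rpow_two, sq_abs, id]
  field_simp
  ring

end Real

theorem profile_energy_dissipation_identity {N p μ β r a b F : ℝ} (ha : a < 0)
    (hode : (p - 1) * |a| ^ (p - 2) * b + (N - 1) / r * (|a| ^ (p - 2) * a)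
      + β * μ * F + β * r * a - |a| ^ (p / 2) = 0) :
    (p - 1) * |a| ^ (p - 2) * a * b + μ * β * F * a
      = -((N - 1) / r) * |a| ^ p - β * r * |a| ^ 2 - |a| ^ ((p + 2) / 2) := by
  have ha' : 0 < |a| := abs_pos.mpr ha.ne
  have h_sq : |a| ^ (p - 2) * a ^ 2 = |a| ^ p := by
    rw [← sq_abs, ← Real.rpow_natCast, ← Real.rpow_add ha']
    norm_num
  have h_half : a * |a| ^ (p / 2) = -|a| ^ ((p + 2) / 2) := by
    rw [show (p + 2) / 2 = p / 2 + 1 by ring, Real.rpow_add_one ha'.ne', abs_of_neg ha]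
    ring
  rw [sq_abs]
  linear_combination a * hode - (N - 1) / r * h_sq + h_half

theorem energy_decreasing_general (N : ℕ) (hN : 1 ≤ N) (p μ β : ℝ)
    (hp1 : 2 * N / (N + 1) < p)
    (hβ : 0 < β)
    (f : ℝ → ℝ) (hf : ContDiffOn ℝ 2 f (Set.Ioi 0))
    (hode : ∀ r > 0,
      deriv (fun s => |deriv f s| ^ (p - 2) * deriv f s) r
        + ((N : ℝ) - 1) / r * (|deriv f r| ^ (p - 2) * deriv f r)
        + β * μ * f r + β * r * deriv f r - |deriv f r| ^ (p / 2) = 0)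
    (hneg : ∀ r > 0, deriv f r < 0) :
    ∀ r > 0,
      deriv (fun s => (p - 1) / p * |deriv f s| ^ p + μ * β / 2 * f s ^ 2) r
        = -(((N : ℝ) - 1) / r) * |deriv f r| ^ p - β * r * |deriv f r| ^ 2
          - |deriv f r| ^ ((p + 2) / 2)
      ∧ deriv (fun s => (p - 1) / p * |deriv f s| ^ p + μ * β / 2 * f s ^ 2) r ≤ 0 := by
  intro r hr
  have hN' : (1 : ℝ) ≤ N := by exact_mod_cast hN
  have hp : p ≠ 0 := by
    have : (1 : ℝ) ≤ 2 * N / (N + 1) := by rw [le_div_iff₀ (by positivity)]; linarith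
    linarith
  have hr' : Set.Ioi (0 : ℝ) ∈ nhds r := Ioi_mem_nhds hr
  have hf1 : HasDerivAt f (deriv f r) r :=
    ((hf.differentiableOn two_ne_zero).differentiableAt hr').hasDerivAt
  have hf2 : HasDerivAt (deriv f) (deriv (deriv f) r) r :=
    (((hf.deriv_of_isOpen isOpen_Ioi le_rfl).differentiableOn one_ne_zero).differentiableAt
      hr').hasDerivAt
  have ha := hneg r hr
  have hflux : HasDerivAt (fun s => |deriv f s| ^ (p - 2) * deriv f s)
      ((p - 1) * |deriv f r| ^ (p - 2) * deriv (deriv f) r) r :=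
    (Real.hasDerivAt_abs_rpow_sub_two_mul_self ha.ne p).comp r hf2
  have hode_r := hode r hr
  rw [hflux.deriv] at hode_r
  have hE : HasDerivAt (fun s => (p - 1) / p * |deriv f s| ^ p + μ * β / 2 * f s ^ 2)
      ((p - 1) * |deriv f r| ^ (p - 2) * deriv f r * deriv (deriv f) r
        + μ * β * f r * deriv f r) r :=
    ((((Real.hasDerivAt_abs_rpow ha.ne p).comp r hf2).const_mul _).add
      ((hf1.pow 2).const_mul _)).congr_deriv (by field_simp; ring)
  have hE_eq := hE.deriv.trans (profile_energy_dissipation_identity ha hode_r)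
  refine ⟨hE_eq, hE_eq ▸ ?_⟩
  have h_radial : 0 ≤ ((N : ℝ) - 1) / r * |deriv f r| ^ p := by
    have := sub_nonneg.mpr hN'
    positivity
  have h_drift : 0 < β * r * |deriv f r| ^ 2 := by
    have := abs_pos.mpr ha.ne
    positivity
  have h_absorption : 0 ≤ |deriv f r| ^ ((p + 2) / 2) := by positivity
  linarith

theorem energy_decreasing (N : ℕ) (hN : 1 ≤ N) (p μ β : ℝ)
    (hp1 : 2 * N / (N + 1) < p) (hp2 : p < 2)
    (hμ : μ = p / (2 - p)) (hβ : 0 < β)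
    (f : ℝ → ℝ) (hf : ContDiffOn ℝ 2 f (Set.Ioi 0))
    (hode : ∀ r > 0,
      deriv (fun s => |deriv f s| ^ (p - 2) * deriv f s) r
        + ((N : ℝ) - 1) / r * (|deriv f r| ^ (p - 2) * deriv f r)
        + β * μ * f r + β * r * deriv f r - |deriv f r| ^ (p / 2) = 0)
    (hneg : ∀ r > 0, deriv f r < 0) :
    ∀ r > 0,
      deriv (fun s => (p - 1) / p * |deriv f s| ^ p + μ * β / 2 * f s ^ 2) r
        = -(((N : ℝ) - 1) / r) * |deriv f r| ^ p - β * r * |deriv f r| ^ 2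
          - |deriv f r| ^ ((p + 2) / 2)
      ∧ deriv (fun s => (p - 1) / p * |deriv f s| ^ p + μ * β / 2 * f s ^ 2) r ≤ 0 :=
  energy_decreasing_general N hN p μ β hp1 hβ f hf hode hneg
end

section
/- Let f, f' be nonnegative-limit functions with f nonnegative nonincreasing, E(r) := ((p-1)/p)|f'(r)|^p + (μβ/2) f(r)² nonincreasing, and f' ∈ L^{(p+2)/2}(0,∞). If E(r) → l_E and f(r) → l as r → ∞, then f'(r) → 0 as r → ∞. -/
/-!
Since `E(r)` and `f(r)` converge, so does `|f'(r)|^p`, hence `|f'(r)|` tends to some `M ≥ 0`.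
Then `|f'|^((p+2)/2)` tends to `M^((p+2)/2)`; an integrable function on a half-line can only
have limit `0` at infinity, so `M = 0`.
-/

open Filter Topology MeasureTheory Set

lemma eq_zero_of_integrableOn_Ioi_of_tendsto {E : Type*} [NormedAddCommGroup E]
    {g : ℝ → E} {a : ℝ} {c : E} (hg : IntegrableOn g (Ioi a)) (hc : Tendsto g atTop (𝓝 c)) :
    c = 0 :=
  IntegrableAtFilter.eq_zero_of_tendsto ⟨Ioi a, Ioi_mem_atTop a, hg⟩
    (fun s hs => by
      obtain ⟨b, hb⟩ := mem_atTop_sets.1 hs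
      exact top_le_iff.1 (Real.volume_Ici (a := b) ▸ measure_mono hb))
    hc

lemma tendsto_of_tendsto_const_mul_add {α : Type*} {l : Filter α} {u v : α → ℝ}
    {a c d : ℝ} (ha : a ≠ 0) (h : Tendsto (fun r => a * u r + v r) l (𝓝 c))
    (hv : Tendsto v l (𝓝 d)) : Tendsto u l (𝓝 ((c - d) / a)) := by
  have := (h.sub hv).div_const a
  refine this.congr fun r => ?_
  field_simp
  ring

lemma tendsto_of_tendsto_rpow {α : Type*} {l : Filter α} {u : α → ℝ} {p L : ℝ}
    (hp : 0 < p) (hu : ∀ r, 0 ≤ u r) (h : Tendsto (fun r => u r ^ p) l (𝓝 L)) :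
    Tendsto u l (𝓝 (L ^ p⁻¹)) :=
  (h.rpow_const (Or.inr (inv_nonneg.2 hp.le))).congr fun r => Real.rpow_rpow_inv (hu r) hp.ne'

theorem deriv_tendsto_zero_general (p μ β l lE : ℝ) (hp1 : 1 < p)
    (f : ℝ → ℝ)
    (hfl : Filter.Tendsto f Filter.atTop (nhds l))
    (hEl : Filter.Tendsto (fun r => (p - 1) / p * |deriv f r| ^ p + μ * β / 2 * f r ^ 2)
      Filter.atTop (nhds lE))
    (hint : MeasureTheory.IntegrableOn (fun r => |deriv f r| ^ ((p + 2) / 2))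
      (Set.Ioi 0)) :
    Filter.Tendsto (deriv f) Filter.atTop (nhds 0) := by
  have hcoef : (p - 1) / p ≠ 0 := div_ne_zero (by linarith) (by linarith)
  have hq : 0 < (p + 2) / 2 := by linarith
  have hpow := tendsto_of_tendsto_const_mul_add hcoef hEl ((hfl.pow 2).const_mul (μ * β / 2))
  have habs := tendsto_of_tendsto_rpow (by linarith) (fun r => abs_nonneg _) hpow
  set M := ((lE - μ * β / 2 * l ^ 2) / ((p - 1) / p)) ^ p⁻¹
  have hM : M ^ ((p + 2) / 2) = 0 :=
    eq_zero_of_integrableOn_Ioi_of_tendsto hint (habs.rpow_const (Or.inr hq.le))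
  obtain ⟨hM0, -⟩ :=
    (Real.rpow_eq_zero_iff_of_nonneg (ge_of_tendsto' habs fun r => abs_nonneg _)).1 hM
  exact (tendsto_zero_iff_abs_tendsto_zero _).2 (hM0 ▸ habs)

theorem deriv_tendsto_zero (p μ β l lE : ℝ) (hp1 : 1 < p) (hp2 : p < 2)
    (hμ : 0 < μ) (hβ : 0 < β)
    (f : ℝ → ℝ) (hf : ContDiff ℝ 1 f)
    (hfnn : ∀ r ≥ 0, 0 ≤ f r)
    (hmono : AntitoneOn f (Set.Ici 0))
    (hfl : Filter.Tendsto f Filter.atTop (nhds l))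
    (hE : AntitoneOn (fun r => (p - 1) / p * |deriv f r| ^ p + μ * β / 2 * f r ^ 2)
      (Set.Ici 0))
    (hEl : Filter.Tendsto (fun r => (p - 1) / p * |deriv f r| ^ p + μ * β / 2 * f r ^ 2)
      Filter.atTop (nhds lE))
    (hint : MeasureTheory.IntegrableOn (fun r => |deriv f r| ^ ((p + 2) / 2))
      (Set.Ioi 0)) :
    Filter.Tendsto (deriv f) Filter.atTop (nhds 0) :=
  deriv_tendsto_zero_general p μ β l lE hp1 f hfl hEl hint
end
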